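/- arXiv:1810.03796 — 2 statements merged into one kernel-verified Lean document; each statement's English description precedes it below -/
import Mathlib

section
/- Let n ≥ 2, α ∈ (-n, 0), and φ a Young function satisfying Λ̲_φ(α) < ∞ and Λ̄_φ(α) < ∞, and let Ω ⊆ ℝⁿ be an unbounded domain. Then every u ∈ C_c^1(Ω) has finite Orlicz-Besov seminorm ‖u‖_{Ḃ^{α,φ}(Ω)} < ∞. -/
open MeasureTheory Set Filter
open scoped ENNReal NNReal Topology

noncomputable def Lunder (n : ℕ) (α : ℝ) (φ : ℝ → ℝ) : ℝ≥0∞ :=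
  ⨆ x ∈ Set.Ioi (0:ℝ), ∫⁻ t in Set.Ioo (0:ℝ) 1,
    ENNReal.ofReal (φ (t ^ (1 - α) * x) / (φ x * t ^ (n + 1)))

noncomputable def Lover (n : ℕ) (α : ℝ) (φ : ℝ → ℝ) : ℝ≥0∞ :=
  ⨆ x ∈ Set.Ioi (0:ℝ), ∫⁻ t in Set.Ioi (1:ℝ),
    ENNReal.ofReal (φ (t ^ (-α) * x) / (φ x * t ^ (n + 1)))

noncomputable def besovSet (n : ℕ) (α : ℝ) (φ : ℝ → ℝ)
    (Ω : Set (EuclideanSpace ℝ (Fin n))) (u : EuclideanSpace ℝ (Fin n) → ℝ) : Set ℝ :=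
  {l : ℝ | 0 < l ∧
    (∫⁻ x in Ω, ∫⁻ y in Ω,
      ENNReal.ofReal (φ (|u x - u y| / (l * ‖x - y‖ ^ α)) / ‖x - y‖ ^ (2 * n))) ≤ 1}

/-!
Lipschitz continuity and boundedness of `u` bound the Besov integrand at distance `r` by
`φ (min (C r^{1-α}) (M r^{-α})) / r^{2n}`, and the integrand vanishes unless one of the two
points lies in the compact support `K` of `u`. Integrating this radial majorant in polar
coordinates splits into `r < 1`, controlled by `Λ̲_φ(α)`, and `r > 1`, controlled by `Λ̄_φ(α)`,
so the Besov double integral at `λ = 1` is at most `2 |K|` times a finite constant. Convexity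
of `φ` with `φ 0 = 0` then makes the integral at `λ ≥ 1` at most `1 / λ` times its value at
`λ = 1`.
-/

namespace ConvexOn

variable {φ : ℝ → ℝ}

lemma map_mul_le_mul_of_map_zero (hφ : ConvexOn ℝ (Ici 0) φ) (h0 : φ 0 = 0)
    {θ s : ℝ} (hθ0 : 0 ≤ θ) (hθ1 : θ ≤ 1) (hs : 0 ≤ s) : φ (θ * s) ≤ θ * φ s := by
  simpa [h0] using hφ.2 (mem_Ici.2 hs) (mem_Ici.2 le_rfl) hθ0 (sub_nonneg.2 hθ1) (by ring)

lemma monotoneOn_Ici_of_map_zero (hφ : ConvexOn ℝ (Ici 0) φ) (h0 : φ 0 = 0)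
    (hnn : ∀ t > 0, 0 ≤ φ t) : MonotoneOn φ (Ici 0) := by
  intro s (hs : 0 ≤ s) t _ hst
  rcases hst.eq_or_lt with rfl | hlt
  · exact le_rfl
  have ht : 0 < t := hs.trans_lt hlt
  calc φ s = φ (s / t * t) := by rw [div_mul_cancel₀ s ht.ne']
    _ ≤ s / t * φ t :=
      hφ.map_mul_le_mul_of_map_zero h0 (div_nonneg hs ht.le) ((div_le_one ht).2 hst) ht.le
    _ ≤ φ t := mul_le_of_le_one_left (hnn t ht) ((div_le_one ht).2 hst)

end ConvexOn

open Measure Metric in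
lemma lintegral_fun_norm_addHaar {E : Type*} [NormedAddCommGroup E] [NormedSpace ℝ E]
    [MeasurableSpace E] [BorelSpace E] [FiniteDimensional ℝ E] [Nontrivial E]
    (μ : Measure E) [μ.IsAddHaarMeasure] {f : ℝ → ℝ≥0∞}
    (hf : Measurable fun r : Ioi (0 : ℝ) ↦ f r) :
    ∫⁻ x, f ‖x‖ ∂μ = μ.toSphere univ *
      ∫⁻ r in Ioi (0 : ℝ), ENNReal.ofReal (r ^ (Module.finrank ℝ E - 1)) * f r := by
  have hfm : Measurable fun p : sphere (0 : E) 1 × Ioi (0 : ℝ) ↦ f p.2 := hf.comp measurable_snd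
  calc ∫⁻ x, f ‖x‖ ∂μ = ∫⁻ x : ({0}ᶜ : Set E), f ‖(x : E)‖ ∂(μ.comap (↑)) := by
        rw [lintegral_subtype_comap (measurableSet_singleton 0).compl fun x ↦ f ‖x‖,
          restrict_compl_singleton]
    _ = ∫⁻ p, f p.2 ∂(μ.toSphere.prod (volumeIoiPow (Module.finrank ℝ E - 1))) := by
        rw [← μ.measurePreserving_homeomorphUnitSphereProd.lintegral_comp hfm]
        simp
    _ = μ.toSphere univ * ∫⁻ r, f r ∂(volumeIoiPow (Module.finrank ℝ E - 1)) := by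
        rw [lintegral_prod _ hfm.aemeasurable]
        simp [mul_comm]
    _ = _ := by
        rw [volumeIoiPow, lintegral_withDensity_eq_lintegral_mul _
          (measurable_subtype_coe.pow_const _).ennreal_ofReal hf]
        exact congrArg _ (lintegral_subtype_comap measurableSet_Ioi
          fun r ↦ ENNReal.ofReal (r ^ (Module.finrank ℝ E - 1)) * f r)

section Radial

variable {n : ℕ} {α : ℝ} {φ : ℝ → ℝ}

lemma ENNReal.ofReal_div_eq_ofReal_mul_ofReal_div {a b c : ℝ} (hc : 0 < c) :
    ENNReal.ofReal (a / b) = ENNReal.ofReal c * ENNReal.ofReal (a / (c * b)) := by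
  rw [← ENNReal.ofReal_mul hc.le, mul_div_assoc', mul_div_mul_left a b hc.ne']

lemma lintegral_Ioo_le_mul_Lunder {x : ℝ} (hx : 0 < x) (hφx : 0 < φ x) :
    ∫⁻ t in Ioo 0 1, ENNReal.ofReal (φ (t ^ (1 - α) * x) / t ^ (n + 1))
      ≤ ENNReal.ofReal (φ x) * Lunder n α φ := by
  rw [lintegral_congr fun t ↦ ENNReal.ofReal_div_eq_ofReal_mul_ofReal_div hφx,
    lintegral_const_mul' _ _ ENNReal.ofReal_ne_top]
  gcongr
  exact le_iSup₂ (f := fun x (_ : x ∈ Ioi (0 : ℝ)) ↦ ∫⁻ t in Ioo 0 1,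
    ENNReal.ofReal (φ (t ^ (1 - α) * x) / (φ x * t ^ (n + 1)))) x hx

lemma lintegral_Ioi_le_mul_Lover {x : ℝ} (hx : 0 < x) (hφx : 0 < φ x) :
    ∫⁻ t in Ioi 1, ENNReal.ofReal (φ (t ^ (-α) * x) / t ^ (n + 1))
      ≤ ENNReal.ofReal (φ x) * Lover n α φ := by
  rw [lintegral_congr fun t ↦ ENNReal.ofReal_div_eq_ofReal_mul_ofReal_div hφx,
    lintegral_const_mul' _ _ ENNReal.ofReal_ne_top]
  gcongr
  exact le_iSup₂ (f := fun x (_ : x ∈ Ioi (0 : ℝ)) ↦ ∫⁻ t in Ioi 1,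
    ENNReal.ofReal (φ (t ^ (-α) * x) / (φ x * t ^ (n + 1)))) x hx

lemma lintegral_Ioi_min_le_Lunder_add_Lover (hφ : MonotoneOn φ (Ici 0))
    (hpos : ∀ t > 0, 0 < φ t) {a b : ℝ} (ha : 0 < a) (hb : 0 < b) :
    ∫⁻ t in Ioi 0, ENNReal.ofReal (φ (min (t ^ (1 - α) * a) (t ^ (-α) * b)) / t ^ (n + 1))
      ≤ ENNReal.ofReal (φ a) * Lunder n α φ + ENNReal.ofReal (φ b) * Lover n α φ := by
  have hle : ∀ t > 0, ∀ c, 0 ≤ c → min (t ^ (1 - α) * a) (t ^ (-α) * b) ≤ c →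
      ENNReal.ofReal (φ (min (t ^ (1 - α) * a) (t ^ (-α) * b)) / t ^ (n + 1))
        ≤ ENNReal.ofReal (φ c / t ^ (n + 1)) := fun t ht c hc hmin ↦
    ENNReal.ofReal_le_ofReal <| div_le_div_of_nonneg_right
      (hφ (mem_Ici.2 (le_min (by positivity) (by positivity))) (mem_Ici.2 hc) hmin) (by positivity)
  rw [← Ioo_union_Ici_eq_Ioi zero_lt_one]
  refine (lintegral_union_le _ _ _).trans (add_le_add ?_ ?_)
  · refine le_trans (setLIntegral_mono' measurableSet_Ioo fun t ht ↦ ?_)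
      (lintegral_Ioo_le_mul_Lunder ha (hpos a ha))
    exact hle t ht.1 _ (by have := ht.1; positivity) (min_le_left _ _)
  · rw [setLIntegral_congr Ioi_ae_eq_Ici.symm]
    refine le_trans (setLIntegral_mono' measurableSet_Ioi fun t ht ↦ ?_)
      (lintegral_Ioi_le_mul_Lover hb (hpos b hb))
    have ht : (0 : ℝ) < t := zero_lt_one.trans ht
    exact hle t ht _ (by positivity) (min_le_right _ _)

end Radial

/-- If `|u x - u y| ≤ min (C r) M` at distance `r = ‖x - y‖`, this bounds the integrand of
`besovSet` at `l = 1`. -/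
noncomputable def radialMajorant (n : ℕ) (α : ℝ) (φ : ℝ → ℝ) (C M r : ℝ) : ℝ≥0∞ :=
  ENNReal.ofReal (φ (min (r ^ (1 - α) * C) (r ^ (-α) * M)) / r ^ (2 * n))

section RadialMajorant

variable {n : ℕ} {α : ℝ} {φ : ℝ → ℝ} {C M : ℝ}

lemma measurable_radialMajorant_comp {X : Type*} [MeasurableSpace X] {m : X → ℝ}
    (hm : Measurable m) (hm0 : ∀ x, 0 ≤ m x) (hφ : MonotoneOn φ (Ici 0))
    (hC : 0 ≤ C) (hM : 0 ≤ M) : Measurable fun x ↦ radialMajorant n α φ C M (m x) := by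
  set arg := fun x ↦ min (m x ^ (1 - α) * C) (m x ^ (-α) * M)
  have harg : Measurable arg :=
    ((hm.pow_const _).mul_const _).min ((hm.pow_const _).mul_const _)
  -- `φ` is only monotone on `[0, ∞)`; `arg` takes values there, where `φ t = φ (max t 0)`.
  have hφ' : Monotone fun t ↦ φ (max t 0) := fun s t hst ↦
    hφ (mem_Ici.2 (le_max_right _ _)) (mem_Ici.2 (le_max_right _ _)) (max_le_max hst le_rfl)
  have hφarg : Measurable fun x ↦ φ (arg x) := by
    convert hφ'.measurable.comp harg using 2 with x
    have := hm0 x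
    exact congrArg φ (max_eq_left (by positivity)).symm
  exact (hφarg.div (hm.pow_const _)).ennreal_ofReal

lemma lintegral_radialMajorant_norm_lt_top {E : Type*} [NormedAddCommGroup E]
    [NormedSpace ℝ E] [MeasurableSpace E] [BorelSpace E] [FiniteDimensional ℝ E] [Nontrivial E]
    (μ : Measure E) [μ.IsAddHaarMeasure] (hφ : MonotoneOn φ (Ici 0))
    (hpos : ∀ t > 0, 0 < φ t) (hC : 0 < C) (hM : 0 < M)
    (hL1 : Lunder (Module.finrank ℝ E) α φ < ⊤) (hL2 : Lover (Module.finrank ℝ E) α φ < ⊤) :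
    ∫⁻ z, radialMajorant (Module.finrank ℝ E) α φ C M ‖z‖ ∂μ < ⊤ := by
  set d := Module.finrank ℝ E
  have hd : 0 < d := Module.finrank_pos
  have hmeas : Measurable fun r : Ioi (0 : ℝ) ↦ radialMajorant d α φ C M r :=
    measurable_radialMajorant_comp measurable_subtype_coe (fun r ↦ r.2.le) hφ hC.le hM.le
  rw [lintegral_fun_norm_addHaar μ hmeas]
  refine ENNReal.mul_lt_top (measure_lt_top _ _) ?_
  have hpow : ∀ r ∈ Ioi (0 : ℝ), ENNReal.ofReal (r ^ (d - 1)) * radialMajorant d α φ C M r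
      = ENNReal.ofReal (φ (min (r ^ (1 - α) * C) (r ^ (-α) * M)) / r ^ (d + 1)) := by
    intro r (hr : 0 < r)
    rw [radialMajorant, ← ENNReal.ofReal_mul (by positivity), mul_div_assoc',
      show 2 * d = d - 1 + (d + 1) by omega, pow_add,
      mul_div_mul_left _ _ (by positivity)]
  rw [setLIntegral_congr_fun measurableSet_Ioi hpow]
  exact (lintegral_Ioi_min_le_Lunder_add_Lover hφ hpos hC hM).trans_lt (ENNReal.add_lt_top.2
    ⟨ENNReal.mul_lt_top ENNReal.ofReal_lt_top hL1, ENNReal.mul_lt_top ENNReal.ofReal_lt_top hL2⟩)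

end RadialMajorant

section DoubleIntegral

variable {E : Type*} [NormedAddCommGroup E] [MeasurableSpace E] [BorelSpace E]
  {μ : Measure E} [μ.IsAddRightInvariant] {K : Set E} {g : ℝ → ℝ≥0∞}

lemma lintegral_lintegral_indicator_mul_norm_sub (hK : MeasurableSet K) :
    ∫⁻ x, ∫⁻ y, K.indicator 1 x * g ‖x - y‖ ∂μ ∂μ = μ K * ∫⁻ z, g ‖z‖ ∂μ := by
  have hinner : ∀ x, ∫⁻ y, g ‖x - y‖ ∂μ = ∫⁻ z, g ‖z‖ ∂μ := fun x ↦ by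
    simp_rw [norm_sub_rev x]
    exact lintegral_sub_right_eq_self (fun z ↦ g ‖z‖) x
  have hind : ∀ x, K.indicator (1 : E → ℝ≥0∞) x ≠ ⊤ := fun x ↦
    ne_top_of_le_ne_top ENNReal.one_ne_top (indicator_le_self' (fun _ _ ↦ zero_le_one) x)
  simp_rw [lintegral_const_mul' _ _ (hind _), hinner]
  rw [lintegral_mul_const _ (measurable_one.indicator hK), lintegral_indicator_one hK]

variable [SecondCountableTopology E] [SFinite μ]

lemma lintegral_lintegral_indicator_add_mul_norm_sub (hK : MeasurableSet K)
    (hg : Measurable fun z : E ↦ g ‖z‖) :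
    ∫⁻ x, ∫⁻ y, (K.indicator 1 x + K.indicator 1 y) * g ‖x - y‖ ∂μ ∂μ
      = 2 * (μ K * ∫⁻ z, g ‖z‖ ∂μ) := by
  have hind : Measurable (K.indicator (1 : E → ℝ≥0∞)) := measurable_one.indicator hK
  have hsub : Measurable fun p : E × E ↦ g ‖p.1 - p.2‖ :=
    hg.comp (measurable_fst.sub measurable_snd)
  have hleft : Measurable fun p : E × E ↦ K.indicator 1 p.1 * g ‖p.1 - p.2‖ :=
    (hind.comp measurable_fst).mul hsub
  have hright : Measurable fun p : E × E ↦ K.indicator 1 p.2 * g ‖p.1 - p.2‖ :=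
    (hind.comp measurable_snd).mul hsub
  have hswap : ∫⁻ x, ∫⁻ y, K.indicator 1 y * g ‖x - y‖ ∂μ ∂μ
      = ∫⁻ x, ∫⁻ y, K.indicator 1 x * g ‖x - y‖ ∂μ ∂μ := by
    rw [lintegral_lintegral_swap hright.aemeasurable]
    simp_rw [norm_sub_rev]
  have hsplit : ∀ x, ∫⁻ y, (K.indicator 1 x + K.indicator 1 y) * g ‖x - y‖ ∂μ
      = ∫⁻ y, K.indicator 1 x * g ‖x - y‖ ∂μ + ∫⁻ y, K.indicator 1 y * g ‖x - y‖ ∂μ :=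
    fun x ↦ by simp_rw [add_mul]; exact lintegral_add_left (hleft.comp measurable_prodMk_left) _
  rw [lintegral_congr hsplit, lintegral_add_left hleft.lintegral_prod_right', hswap,
    lintegral_lintegral_indicator_mul_norm_sub hK, two_mul]

end DoubleIntegral

section Besov

variable {n : ℕ} {α : ℝ} {φ : ℝ → ℝ}

lemma ofReal_div_le_indicator_add_mul_radialMajorant {E : Type*} [NormedAddCommGroup E]
    {u : E → ℝ} {C M : ℝ} (hφ : MonotoneOn φ (Ici 0)) (h0 : φ 0 = 0)
    (hC : ∀ x y, |u x - u y| ≤ C * ‖x - y‖) (hM : ∀ x y, |u x - u y| ≤ M) (x y : E) :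
    ENNReal.ofReal (φ (|u x - u y| / ‖x - y‖ ^ α) / ‖x - y‖ ^ (2 * n))
      ≤ ((tsupport u).indicator 1 x + (tsupport u).indicator 1 y)
        * radialMajorant n α φ C M ‖x - y‖ := by
  by_cases huxy : u x = u y
  · simp [huxy, h0]
  have hr : 0 < ‖x - y‖ := norm_pos_iff.2 (sub_ne_zero.2 fun h ↦ huxy (h ▸ rfl))
  have hrα : 0 < ‖x - y‖ ^ α := Real.rpow_pos_of_pos hr α
  have harg : |u x - u y| / ‖x - y‖ ^ α
      ≤ min (‖x - y‖ ^ (1 - α) * C) (‖x - y‖ ^ (-α) * M) := by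
    rw [div_le_iff₀ hrα, min_mul_of_nonneg _ _ hrα.le]
    refine le_min ((hC x y).trans_eq ?_) ((hM x y).trans_eq ?_)
    · rw [mul_right_comm, ← Real.rpow_add hr, sub_add_cancel, Real.rpow_one, mul_comm]
    · rw [mul_right_comm, ← Real.rpow_add hr, neg_add_cancel, Real.rpow_zero, one_mul]
  have hmem : x ∈ tsupport u ∨ y ∈ tsupport u := by
    by_contra! h
    exact huxy (by rw [image_eq_zero_of_notMem_tsupport h.1, image_eq_zero_of_notMem_tsupport h.2])
  have hone : 1 ≤ (tsupport u).indicator (1 : E → ℝ≥0∞) x + (tsupport u).indicator 1 y := by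
    rcases hmem with h | h
    · exact le_add_right (by simp [h])
    · exact le_add_left (by simp [h])
  calc ENNReal.ofReal (φ (|u x - u y| / ‖x - y‖ ^ α) / ‖x - y‖ ^ (2 * n))
      ≤ radialMajorant n α φ C M ‖x - y‖ :=
        ENNReal.ofReal_le_ofReal (div_le_div_of_nonneg_right
          (hφ (mem_Ici.2 (by positivity)) (mem_Ici.2 ((by positivity : (0:ℝ) ≤ _).trans harg)) harg)
          (by positivity))
    _ ≤ _ := le_mul_of_one_le_left bot_le hone

lemma besovSet_nonempty_of_lintegral_ne_top (hφ : ConvexOn ℝ (Ici 0) φ) (h0 : φ 0 = 0)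
    {Ω : Set (EuclideanSpace ℝ (Fin n))} {u : EuclideanSpace ℝ (Fin n) → ℝ}
    (hfin : ∫⁻ x in Ω, ∫⁻ y in Ω,
      ENNReal.ofReal (φ (|u x - u y| / ‖x - y‖ ^ α) / ‖x - y‖ ^ (2 * n)) ≠ ⊤) :
    (besovSet n α φ Ω u).Nonempty := by
  set F := ∫⁻ x in Ω, ∫⁻ y in Ω,
    ENNReal.ofReal (φ (|u x - u y| / ‖x - y‖ ^ α) / ‖x - y‖ ^ (2 * n))
  set l := F.toReal + 1
  have hl : 1 ≤ l := le_add_of_nonneg_left ENNReal.toReal_nonneg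
  have hl0 : 0 < l := zero_lt_one.trans_le hl
  have hpt : ∀ x y : EuclideanSpace ℝ (Fin n),
      ENNReal.ofReal (φ (|u x - u y| / (l * ‖x - y‖ ^ α)) / ‖x - y‖ ^ (2 * n))
        ≤ ENNReal.ofReal l⁻¹ *
          ENNReal.ofReal (φ (|u x - u y| / ‖x - y‖ ^ α) / ‖x - y‖ ^ (2 * n)) := by
    intro x y
    rw [← ENNReal.ofReal_mul (inv_nonneg.2 hl0.le), mul_div_assoc',
      show |u x - u y| / (l * ‖x - y‖ ^ α) = l⁻¹ * (|u x - u y| / ‖x - y‖ ^ α) by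
        rw [div_mul_eq_div_div_swap, div_eq_inv_mul]]
    gcongr
    exact hφ.map_mul_le_mul_of_map_zero h0 (inv_nonneg.2 hl0.le) (inv_le_one_of_one_le₀ hl)
      (by positivity)
  refine ⟨l, hl0, ?_⟩
  calc _ ≤ ∫⁻ x in Ω, ∫⁻ y in Ω, ENNReal.ofReal l⁻¹ *
        ENNReal.ofReal (φ (|u x - u y| / ‖x - y‖ ^ α) / ‖x - y‖ ^ (2 * n)) :=
      lintegral_mono fun x ↦ lintegral_mono fun y ↦ hpt x y
    _ = ENNReal.ofReal l⁻¹ * F := by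
      rw [lintegral_congr fun x ↦ lintegral_const_mul' _ _ ENNReal.ofReal_ne_top,
        lintegral_const_mul' _ _ ENNReal.ofReal_ne_top]
    _ ≤ ENNReal.ofReal l⁻¹ * ENNReal.ofReal l := by
      gcongr
      rw [← ENNReal.ofReal_toReal hfin]
      exact ENNReal.ofReal_le_ofReal (le_add_of_nonneg_right zero_le_one)
    _ = 1 := by rw [← ENNReal.ofReal_mul (inv_nonneg.2 hl0.le), inv_mul_cancel₀ hl0.ne',
      ENNReal.ofReal_one]


lemma HasCompactSupport.exists_pos_abs_sub_le {E : Type*} [NormedAddCommGroup E]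
    [NormedSpace ℝ E] {u : E → ℝ} (hsupp : HasCompactSupport u) (hu : ContDiff ℝ 1 u) :
    ∃ C > 0, ∃ M > 0, (∀ x y, |u x - u y| ≤ C * ‖x - y‖) ∧ ∀ x y, |u x - u y| ≤ M := by
  obtain ⟨C, hC⟩ := hu.lipschitzWith_of_hasCompactSupport hsupp one_ne_zero
  obtain ⟨B, hB⟩ := hu.continuous.bounded_above_of_compact_support hsupp
  refine ⟨C + 1, by positivity, 2 * |B| + 1, by positivity, fun x y ↦ ?_, fun x y ↦ ?_⟩
  · have := hC.dist_le_mul x y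
    rw [Real.dist_eq, dist_eq_norm] at this
    nlinarith [norm_nonneg (x - y)]
  · have := (abs_sub _ _).trans (add_le_add (hB x) (hB y))
    linarith [le_abs_self B]

lemma lintegral_lintegral_besov_lt_top {E : Type*} [NormedAddCommGroup E] [NormedSpace ℝ E]
    [MeasurableSpace E] [BorelSpace E] [FiniteDimensional ℝ E] [Nontrivial E]
    (μ : Measure E) [μ.IsAddHaarMeasure] (hφ : MonotoneOn φ (Ici 0)) (h0 : φ 0 = 0)
    (hpos : ∀ t > 0, 0 < φ t)
    (hL1 : Lunder (Module.finrank ℝ E) α φ < ⊤) (hL2 : Lover (Module.finrank ℝ E) α φ < ⊤)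
    {u : E → ℝ} (hu : ContDiff ℝ 1 u) (hsupp : HasCompactSupport u) :
    ∫⁻ x, ∫⁻ y, ENNReal.ofReal
      (φ (|u x - u y| / ‖x - y‖ ^ α) / ‖x - y‖ ^ (2 * Module.finrank ℝ E)) ∂μ ∂μ < ⊤ := by
  obtain ⟨C, hC, M, hM, hLip, hosc⟩ := hsupp.exists_pos_abs_sub_le hu
  refine lt_of_le_of_lt ?_ (ENNReal.mul_lt_top (by norm_num : (2 : ℝ≥0∞) < ⊤)
    (ENNReal.mul_lt_top (hsupp.measure_lt_top (μ := μ))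
      (lintegral_radialMajorant_norm_lt_top μ hφ hpos hC hM hL1 hL2)))
  calc _ ≤ ∫⁻ x, ∫⁻ y, ((tsupport u).indicator 1 x + (tsupport u).indicator 1 y)
          * radialMajorant (Module.finrank ℝ E) α φ C M ‖x - y‖ ∂μ ∂μ :=
        lintegral_mono fun x ↦ lintegral_mono fun y ↦
          ofReal_div_le_indicator_add_mul_radialMajorant hφ h0 hLip hosc x y
    _ = _ := lintegral_lintegral_indicator_add_mul_norm_sub (isClosed_tsupport u).measurableSet
        (measurable_radialMajorant_comp measurable_norm (fun _ ↦ norm_nonneg _) hφ hC.le hM.le)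

end Besov

theorem stmt10_general (n : ℕ) (hn : 2 ≤ n) (α : ℝ)
    (φ : ℝ → ℝ)
    (hconv : ConvexOn ℝ (Set.Ici 0) φ)
    (hzero : φ 0 = 0) (hpos : ∀ t > 0, 0 < φ t)
    (hL1 : Lunder n α φ < ⊤) (hL2 : Lover n α φ < ⊤)
    (Ω : Set (EuclideanSpace ℝ (Fin n)))
    (u : EuclideanSpace ℝ (Fin n) → ℝ) (hu : ContDiff ℝ 1 u)
    (hsupp : HasCompactSupport u) :
    (besovSet n α φ Ω u).Nonempty := by
  have : Nontrivial (EuclideanSpace ℝ (Fin n)) :=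
    Module.nontrivial_of_finrank_pos (R := ℝ) (by rw [finrank_euclideanSpace_fin]; omega)
  have hfin := lintegral_lintegral_besov_lt_top volume
    (hconv.monotoneOn_Ici_of_map_zero hzero fun t ht ↦ (hpos t ht).le) hzero hpos
    (by simpa using hL1) (by simpa using hL2) hu hsupp
  rw [finrank_euclideanSpace_fin] at hfin
  refine besovSet_nonempty_of_lintegral_ne_top hconv hzero (ne_top_of_le_ne_top hfin.ne ?_)
  exact lintegral_mono' Measure.restrict_le_self fun _ ↦
    lintegral_mono' Measure.restrict_le_self le_rfl

theorem stmt10 (n : ℕ) (hn : 2 ≤ n) (α : ℝ) (hα1 : -(n : ℝ) < α) (hα2 : α < 0)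
    (φ : ℝ → ℝ)
    (hconv : ConvexOn ℝ (Set.Ici 0) φ) (hcont : ContinuousOn φ (Set.Ici 0))
    (hzero : φ 0 = 0) (hpos : ∀ t > 0, 0 < φ t)
    (htop : Filter.Tendsto φ Filter.atTop Filter.atTop)
    (hL1 : Lunder n α φ < ⊤) (hL2 : Lover n α φ < ⊤)
    (Ω : Set (EuclideanSpace ℝ (Fin n))) (hopen : IsOpen Ω) (hconn : IsConnected Ω)
    (hunbd : ¬ Bornology.IsBounded Ω)
    (u : EuclideanSpace ℝ (Fin n) → ℝ) (hu : ContDiff ℝ 1 u)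
    (hsupp : HasCompactSupport u) (hsub : tsupport u ⊆ Ω) :
    (besovSet n α φ Ω u).Nonempty :=
  stmt10_general n hn α φ hconv hzero hpos hL1 hL2 Ω u hu hsupp
end

section
/- Let n ≥ 2, α ∈ (-n, 0), and φ a Young function satisfying Λ̲_φ(α) < ∞ and Λ̄_φ(α) < ∞, and let Ω ⊆ ℝⁿ be a globally n-regular domain with constant θ. Then there exist constants C₁, C₂ > 0 depending only on n, α, φ, θ such that for all t > 0, x ∈ Ω, and measurable E ⊂ Ω with 0 < |E| < ∞, one has ∫_{Ω\E} φ(t|x-y|^{-α})/|x-y|^{2n} dy ≥ C₁ (1/|E|)(|Ω\E|/|Ω|) φ(C₂ t |E|^{|α|/n}), where |Ω\E|/|Ω| is interpreted as 1 if |Ω| = ∞. -/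
open MeasureTheory Set Filter
open scoped ENNReal NNReal Topology

/-!
Put `e = |E|` and choose `R` with `θ Rⁿ = 2e`. Since `φ` is increasing (convex with `φ(0) = 0`),
the integrand of `Λ̄_φ(α)` at `s` is at least `φ(T^{-α} s) / (φ(s) (2T)^{n+1})` on `(T, 2T)`,
so finiteness of `Λ̄_φ(α)` yields the growth bound `φ(T^{-α} s) ≤ K Tⁿ φ(s)` for `T ≥ 1`.
Hence for `0 < |x - y| ≤ P ≤ R` the kernel satisfies
`φ(t |x-y|^{-α}) / |x-y|^{2n} ≥ φ(t R^{-α}) / (K Rⁿ Pⁿ)`. Regularity supplies a set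
`S ⊆ (Ω \ E) ∩ B̄(x, P)` with `|S| ≥ (θ/2) (|Ω \ E|/|Ω|) Pⁿ`: if `R < 2 diam Ω` take `P = R` and
`S = B(x, R) ∩ Ω \ E`, which has measure at least `θ Rⁿ - e = θ Rⁿ / 2`; otherwise take
`P = diam Ω` and `S = Ω \ E`, using `|Ω| ≥ θ Pⁿ`. Integrating the kernel bound over `S`, the
factors `Pⁿ` cancel and `t R^{-α} = (2/θ)^{|α|/n} t e^{|α|/n}`.
-/

noncomputable def volumeFraction {X : Type*} [MeasureSpace X] (Ω E : Set X) : ℝ :=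
  if volume Ω = ⊤ then 1 else (volume (Ω \ E)).toReal / (volume Ω).toReal

def IsGloballyRegular {X : Type*} [PseudoMetricSpace X] [MeasureSpace X]
    (n : ℕ) (θ : ℝ) (Ω : Set X) : Prop :=
  ∀ x ∈ Ω, ∀ r : ℝ, 0 < r → ENNReal.ofReal r < 2 * Metric.ediam Ω →
    ENNReal.ofReal (θ * r ^ n) ≤ volume (Metric.ball x r ∩ Ω)

section VolumeFraction

variable {X : Type*} [MeasureSpace X] (Ω E : Set X)

lemma volumeFraction_nonneg : 0 ≤ volumeFraction Ω E := by
  unfold volumeFraction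
  split_ifs <;> positivity

lemma volumeFraction_le_one : volumeFraction Ω E ≤ 1 := by
  unfold volumeFraction
  split_ifs with hΩ
  · exact le_rfl
  · exact div_le_one_of_le₀ (ENNReal.toReal_mono hΩ (measure_mono sdiff_subset))
      ENNReal.toReal_nonneg

lemma volumeFraction_of_ne_top (hΩ : volume Ω ≠ ⊤) :
    volumeFraction Ω E = (volume (Ω \ E)).toReal / (volume Ω).toReal :=
  if_neg hΩ

end VolumeFraction

lemma ConvexOn.monotoneOn_of_isMinOn {f : ℝ → ℝ} {a : ℝ} (hf : ConvexOn ℝ (Ici a) f)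
    (hmin : IsMinOn f (Ici a) a) : MonotoneOn f (Ici a) := by
  intro x hx y hy hxy
  rcases (mem_Ici.1 hx).eq_or_lt with rfl | hax
  · exact hmin hy
  · exact hf.le_right_of_left_le'' (mem_Ici.2 le_rfl) hy hax hxy (hmin hx)

section Growth

variable {n : ℕ} {α : ℝ} {φ : ℝ → ℝ}

lemma lintegral_le_Lover {s : ℝ} (hs : 0 < s) :
    ∫⁻ t in Ioi 1, ENNReal.ofReal (φ (t ^ (-α) * s) / (φ s * t ^ (n + 1))) ≤ Lover n α φ :=
  le_iSup₂ (f := fun x (_ : x ∈ Ioi (0 : ℝ)) => ∫⁻ t in Ioi 1,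
    ENNReal.ofReal (φ (t ^ (-α) * x) / (φ x * t ^ (n + 1)))) s hs

lemma ofReal_le_lintegral_Ioi_one (hα : α ≤ 0) (hmono : MonotoneOn φ (Ici 0))
    (hpos : ∀ t > 0, 0 < φ t) {s T : ℝ} (hs : 0 < s) (hT : 1 ≤ T) :
    ENNReal.ofReal (T * (φ (T ^ (-α) * s) / (φ s * (2 * T) ^ (n + 1)))) ≤
      ∫⁻ t in Ioi 1, ENNReal.ofReal (φ (t ^ (-α) * s) / (φ s * t ^ (n + 1))) := by
  have hT0 : 0 < T := one_pos.trans_le hT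
  have hφs := hpos s hs
  calc ENNReal.ofReal (T * (φ (T ^ (-α) * s) / (φ s * (2 * T) ^ (n + 1))))
      = ∫⁻ _ in Ioo T (2 * T), ENNReal.ofReal (φ (T ^ (-α) * s) / (φ s * (2 * T) ^ (n + 1))) := by
        rw [setLIntegral_const, Real.volume_Ioo, ENNReal.ofReal_mul hT0.le, mul_comm]
        ring_nf
    _ ≤ ∫⁻ t in Ioo T (2 * T), ENNReal.ofReal (φ (t ^ (-α) * s) / (φ s * t ^ (n + 1))) := by
        refine setLIntegral_mono' measurableSet_Ioo fun u ⟨hTu, hu2T⟩ => ?_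
        have hu0 : 0 < u := hT0.trans hTu
        have hmono_u : φ (T ^ (-α) * s) ≤ φ (u ^ (-α) * s) :=
          hmono (by positivity : (0 : ℝ) ≤ _) (by positivity : (0 : ℝ) ≤ _)
            (by gcongr; linarith)
        gcongr
        exact (hpos _ (by positivity)).le.trans hmono_u
    _ ≤ _ := lintegral_mono_set fun u hu => lt_of_le_of_lt hT hu.1

lemma exists_growth_of_Lover_lt_top (hα : α ≤ 0) (hmono : MonotoneOn φ (Ici 0))
    (hpos : ∀ t > 0, 0 < φ t) (hL : Lover n α φ < ⊤) :
    ∃ K > 0, ∀ s > 0, ∀ T ≥ 1, φ (T ^ (-α) * s) ≤ K * T ^ n * φ s := by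
  set M := (Lover n α φ).toReal
  refine ⟨2 ^ (n + 1) * M + 1, by positivity, fun s hs T hT => ?_⟩
  have hT0 : 0 < T := one_pos.trans_le hT
  have hφs := hpos s hs
  have h : T * (φ (T ^ (-α) * s) / (φ s * (2 * T) ^ (n + 1))) ≤ M :=
    (ENNReal.ofReal_le_iff_le_toReal hL.ne).1
      ((ofReal_le_lintegral_Ioi_one hα hmono hpos hs hT).trans (lintegral_le_Lover hs))
  rw [mul_div_assoc', div_le_iff₀ (by positivity),
    show (2 * T) ^ (n + 1) = 2 ^ (n + 1) * T ^ n * T by ring] at h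
  have h' : φ (T ^ (-α) * s) ≤ 2 ^ (n + 1) * M * T ^ n * φ s := by
    refine le_of_mul_le_mul_left ?_ hT0
    linarith
  nlinarith [pow_pos hT0 n]

end Growth

lemma div_le_div_of_growth {n : ℕ} {α K : ℝ} {φ : ℝ → ℝ}
    (hgrowth : ∀ s > 0, ∀ T ≥ 1, φ (T ^ (-α) * s) ≤ K * T ^ n * φ s) (hK : 0 < K)
    {t d P R : ℝ} (ht : 0 < t) (hd : 0 < d) (hdP : d ≤ P) (hPR : P ≤ R)
    (hφ : 0 ≤ φ (t * d ^ (-α))) :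
    φ (t * R ^ (-α)) / (K * R ^ n * P ^ n) ≤ φ (t * d ^ (-α)) / d ^ (2 * n) := by
  have hP : 0 < P := hd.trans_le hdP
  have hR : 0 < R := hP.trans_le hPR
  have h := hgrowth (t * d ^ (-α)) (by positivity) (R / d)
    ((one_le_div hd).2 (hdP.trans hPR))
  have hscale : (R / d) ^ (-α) * (t * d ^ (-α)) = t * R ^ (-α) := by
    rw [Real.div_rpow hR.le hd.le]
    field_simp [(Real.rpow_pos_of_pos hd (-α)).ne']
  rw [hscale, div_pow, mul_div_assoc', div_mul_eq_mul_div, le_div_iff₀ (by positivity)] at h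
  rw [div_le_div_iff₀ (by positivity) (by positivity), pow_mul', sq]
  calc φ (t * R ^ (-α)) * (d ^ n * d ^ n) ≤ K * R ^ n * φ (t * d ^ (-α)) * d ^ n := by
        nlinarith [pow_pos hd n]
    _ ≤ K * R ^ n * φ (t * d ^ (-α)) * P ^ n := by gcongr
    _ = φ (t * d ^ (-α)) * (K * R ^ n * P ^ n) := by ring

lemma ofReal_mul_volume_le_setLIntegral {V : Type*} [NormedAddCommGroup V] [MeasureSpace V]
    [NullSingletonClass (volume : Measure V)] {n : ℕ} {α K : ℝ} {φ : ℝ → ℝ}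
    (hgrowth : ∀ s > 0, ∀ T ≥ 1, φ (T ^ (-α) * s) ≤ K * T ^ n * φ s) (hK : 0 < K)
    (hφ : ∀ s > 0, 0 ≤ φ s) {t P R : ℝ} (ht : 0 < t) (hPR : P ≤ R)
    {x : V} {S : Set V} (hS : MeasurableSet S)
    (hSP : S ⊆ Metric.closedBall x P) :
    ENNReal.ofReal (φ (t * R ^ (-α)) / (K * R ^ n * P ^ n)) * volume S ≤
      ∫⁻ y in S, ENNReal.ofReal (φ (t * ‖x - y‖ ^ (-α)) / ‖x - y‖ ^ (2 * n)) := by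
  rw [← setLIntegral_const]
  refine setLIntegral_mono_ae' hS ?_
  filter_upwards [Measure.ae_ne volume x] with y hyx hyS
  have hd : 0 < ‖x - y‖ := norm_pos_iff.2 (sub_ne_zero.2 hyx.symm)
  have hdP : ‖x - y‖ ≤ P := by simpa [dist_eq_norm'] using hSP hyS
  exact ENNReal.ofReal_le_ofReal
    (div_le_div_of_growth hgrowth hK ht hd hdP hPR (hφ _ (by positivity)))

section Regular

variable {X : Type*} [MetricSpace X] [MeasureSpace X] {n : ℕ} {θ R : ℝ} {Ω E : Set X} {x : X}

lemma le_volume_ball_inter_diff_of_lt_ediam (hreg : IsGloballyRegular n θ Ω) (hx : x ∈ Ω)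
    (hEfin : volume E ≠ ⊤) (hR : 0 < R) (hRΩ : ENNReal.ofReal R < 2 * Metric.ediam Ω)
    (hRE : 2 * (volume E).toReal ≤ θ * R ^ n) :
    ENNReal.ofReal (θ / 2 * volumeFraction Ω E * R ^ n) ≤ volume ((Metric.ball x R ∩ Ω) \ E) := by
  refine le_trans ?_ le_measure_sdiff
  refine ENNReal.le_sub_of_add_le_right hEfin ?_
  have hθR : 0 ≤ θ * R ^ n := le_trans (by positivity) hRE
  have hρ0 := mul_nonneg hθR (volumeFraction_nonneg Ω E)
  have hρ1 := mul_nonneg hθR (sub_nonneg.2 (volumeFraction_le_one Ω E))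
  calc ENNReal.ofReal (θ / 2 * volumeFraction Ω E * R ^ n) + volume E
      ≤ ENNReal.ofReal (θ * R ^ n) := by
        rw [← ENNReal.ofReal_toReal hEfin, ← ENNReal.ofReal_add (by nlinarith) (by positivity)]
        exact ENNReal.ofReal_le_ofReal (by nlinarith)
    _ ≤ volume (Metric.ball x R ∩ Ω) := hreg x hx R hR hRΩ

lemma le_volume_diff_of_ediam_le [ProperSpace X] [IsFiniteMeasureOnCompacts (volume : Measure X)]
    [NullSingletonClass (volume : Measure X)] (hreg : IsGloballyRegular n θ Ω) (hx : x ∈ Ω)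
    (hEΩ : E ⊆ Ω) (hE0 : 0 < volume E) (hRΩ : 2 * Metric.ediam Ω ≤ ENNReal.ofReal R) :
    0 < Metric.diam Ω ∧ Metric.diam Ω ≤ R ∧ Ω ⊆ Metric.closedBall x (Metric.diam Ω) ∧
      ENNReal.ofReal (θ / 2 * volumeFraction Ω E * Metric.diam Ω ^ n) ≤ volume (Ω \ E) := by
  have hbdd : Bornology.IsBounded Ω := Metric.isBounded_iff_ediam_ne_top.2 <| by
    intro h
    simp [h] at hRΩ
  have hvolΩ : 0 < volume Ω := hE0.trans_le (measure_mono hEΩ)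
  have hD : 0 < Metric.diam Ω := Metric.diam_pos
    (not_subsingleton_iff.1 fun h => (h.measure_zero volume ▸ hvolΩ).false) hbdd
  have hdiam : ENNReal.ofReal (Metric.diam Ω) = Metric.ediam Ω :=
    ENNReal.ofReal_toReal (Metric.isBounded_iff_ediam_ne_top.1 hbdd)
  have hball : Ω ⊆ Metric.closedBall x (Metric.diam Ω) := fun y hy =>
    Metric.dist_le_diam_of_mem hbdd hy hx
  have hΩfin : volume Ω ≠ ⊤ := (measure_mono hball).trans_lt measure_closedBall_lt_top |>.ne
  have hθD : θ * Metric.diam Ω ^ n ≤ (volume Ω).toReal := by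
    have hDΩ : ENNReal.ofReal (Metric.diam Ω) < 2 * Metric.ediam Ω := by
      rw [← hdiam, ← ENNReal.ofReal_ofNat 2, ← ENNReal.ofReal_mul zero_le_two,
        ENNReal.ofReal_lt_ofReal_iff (by positivity)]
      linarith
    exact (ENNReal.ofReal_le_iff_le_toReal hΩfin).1
      ((hreg x hx _ hD hDΩ).trans (measure_mono inter_subset_right))
  refine ⟨hD, ?_, hball, ?_⟩
  · rw [← hdiam, ← ENNReal.ofReal_ofNat 2, ← ENNReal.ofReal_mul zero_le_two] at hRΩ
    rcases ENNReal.ofReal_le_ofReal_iff'.1 hRΩ with h | h <;> linarith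
  · refine ENNReal.ofReal_le_of_le_toReal ?_
    rw [volumeFraction_of_ne_top Ω E hΩfin]
    have hw : 0 ≤ (volume (Ω \ E)).toReal := ENNReal.toReal_nonneg
    have hV : 0 < (volume Ω).toReal := ENNReal.toReal_pos hvolΩ.ne' hΩfin
    have : (volume (Ω \ E)).toReal / (volume Ω).toReal * (θ * Metric.diam Ω ^ n) ≤
        (volume (Ω \ E)).toReal := by
      rw [div_mul_eq_mul_div, div_le_iff₀ hV]
      exact mul_le_mul_of_nonneg_left hθD hw
    linarith

lemma exists_subset_closedBall_le_volume [ProperSpace X] [OpensMeasurableSpace X]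
    [IsFiniteMeasureOnCompacts (volume : Measure X)] [NullSingletonClass (volume : Measure X)]
    (hreg : IsGloballyRegular n θ Ω) (hx : x ∈ Ω) (hΩ : MeasurableSet Ω) (hE : MeasurableSet E)
    (hEΩ : E ⊆ Ω) (hE0 : 0 < volume E) (hEfin : volume E ≠ ⊤) (hR : 0 < R)
    (hRE : 2 * (volume E).toReal ≤ θ * R ^ n) :
    ∃ P ∈ Ioc 0 R, ∃ S ⊆ Ω \ E, S ⊆ Metric.closedBall x P ∧ MeasurableSet S ∧
      ENNReal.ofReal (θ / 2 * volumeFraction Ω E * P ^ n) ≤ volume S := by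
  by_cases hRΩ : ENNReal.ofReal R < 2 * Metric.ediam Ω
  · refine ⟨R, ⟨hR, le_rfl⟩, (Metric.ball x R ∩ Ω) \ E, sdiff_subset_sdiff_left inter_subset_right,
      sdiff_subset.trans (inter_subset_left.trans Metric.ball_subset_closedBall),
      (measurableSet_ball.inter hΩ).diff hE,
      le_volume_ball_inter_diff_of_lt_ediam hreg hx hEfin hR hRΩ hRE⟩
  · obtain ⟨hD, hDR, hball, hvol⟩ := le_volume_diff_of_ediam_le hreg hx hEΩ hE0 (not_lt.1 hRΩ)
    exact ⟨_, ⟨hD, hDR⟩, Ω \ E, subset_rfl, sdiff_subset.trans hball, hΩ.diff hE, hvol⟩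

end Regular

theorem stmt13_general (n : ℕ) (hn : 2 ≤ n) (α : ℝ) (hα2 : α < 0)
    (φ : ℝ → ℝ)
    (hconv : ConvexOn ℝ (Set.Ici 0) φ)
    (hzero : φ 0 = 0) (hpos : ∀ t > 0, 0 < φ t)
    (hL2 : Lover n α φ < ⊤)
    (θ : ℝ) (hθ : θ ∈ Set.Ioo (0:ℝ) 1) :
    ∃ C₁ > (0:ℝ), ∃ C₂ > (0:ℝ), ∀ Ω : Set (EuclideanSpace ℝ (Fin n)),
      IsOpen Ω → IsConnected Ω →
      (∀ x ∈ Ω, ∀ r : ℝ, 0 < r → ENNReal.ofReal r < 2 * EMetric.diam Ω →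
        ENNReal.ofReal (θ * r ^ n) ≤ volume (Metric.ball x r ∩ Ω)) →
      ∀ t : ℝ, 0 < t → ∀ x ∈ Ω, ∀ E ⊆ Ω, MeasurableSet E →
        0 < volume E → volume E < ⊤ →
        ENNReal.ofReal (C₁ * (volume E).toReal⁻¹ *
            (if volume Ω = ⊤ then 1 else (volume (Ω \ E)).toReal / (volume Ω).toReal) *
            φ (C₂ * t * (volume E).toReal ^ (|α| / n)))
          ≤ ∫⁻ y in Ω \ E,
              ENNReal.ofReal (φ (t * ‖x - y‖ ^ (-α)) / ‖x - y‖ ^ (2 * n)) := by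
  obtain ⟨hθ, -⟩ := hθ
  have : Nonempty (Fin n) := ⟨⟨0, by omega⟩⟩
  have hmono : MonotoneOn φ (Ici 0) := hconv.monotoneOn_of_isMinOn <| isMinOn_iff.2 fun s hs => by
    rcases (mem_Ici.1 hs).eq_or_lt with rfl | hs
    exacts [le_rfl, hzero.le.trans (hpos s hs).le]
  obtain ⟨K, hK, hgrowth⟩ := exists_growth_of_Lover_lt_top hα2.le hmono hpos hL2
  refine ⟨θ ^ 2 / (4 * K), by positivity, (2 / θ) ^ (|α| / n), by positivity, ?_⟩
  intro Ω hΩ _ hreg t ht x hx E hEΩ hE hE0 hEfin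
  set e := (volume E).toReal
  have he : 0 < e := ENNReal.toReal_pos hE0.ne' hEfin.ne
  set R := (2 * e / θ) ^ ((n : ℝ)⁻¹) with hRdef
  have hR : 0 < R := by positivity
  have hRn : R ^ n = 2 * e / θ := Real.rpow_inv_natCast_pow (by positivity) (by omega)
  have hRα : t * R ^ (-α) = (2 / θ) ^ (|α| / n) * t * e ^ (|α| / n) := by
    rw [hRdef, abs_of_neg hα2, ← Real.rpow_mul (by positivity), mul_div_right_comm,
      Real.mul_rpow (by positivity) he.le, inv_mul_eq_div]
    ring
  obtain ⟨P, ⟨hP, hPR⟩, S, hSΩE, hSP, hS, hvolS⟩ := exists_subset_closedBall_le_volume hreg hx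
    hΩ.measurableSet hE hEΩ hE0 hEfin.ne hR (by rw [hRn, mul_div_cancel₀ _ hθ.ne'])
  have hΦ : 0 ≤ φ (t * R ^ (-α)) := (hpos _ (by positivity)).le
  calc ENNReal.ofReal (θ ^ 2 / (4 * K) * e⁻¹ * volumeFraction Ω E *
        φ ((2 / θ) ^ (|α| / n) * t * e ^ (|α| / n)))
      = ENNReal.ofReal (φ (t * R ^ (-α)) / (K * R ^ n * P ^ n)) *
          ENNReal.ofReal (θ / 2 * volumeFraction Ω E * P ^ n) := by
        rw [← ENNReal.ofReal_mul (by positivity), hRα, hRn]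
        congr 1
        field_simp
        ring
    _ ≤ ENNReal.ofReal (φ (t * R ^ (-α)) / (K * R ^ n * P ^ n)) * volume S := by gcongr
    _ ≤ ∫⁻ y in S, ENNReal.ofReal (φ (t * ‖x - y‖ ^ (-α)) / ‖x - y‖ ^ (2 * n)) :=
        ofReal_mul_volume_le_setLIntegral hgrowth hK (fun s hs => (hpos s hs).le) ht hPR hS hSP
    _ ≤ _ := lintegral_mono_set hSΩE

theorem stmt13 (n : ℕ) (hn : 2 ≤ n) (α : ℝ) (hα1 : -(n : ℝ) < α) (hα2 : α < 0)
    (φ : ℝ → ℝ)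
    (hconv : ConvexOn ℝ (Set.Ici 0) φ) (hcont : ContinuousOn φ (Set.Ici 0))
    (hzero : φ 0 = 0) (hpos : ∀ t > 0, 0 < φ t)
    (htop : Filter.Tendsto φ Filter.atTop Filter.atTop)
    (hL1 : Lunder n α φ < ⊤) (hL2 : Lover n α φ < ⊤)
    (θ : ℝ) (hθ : θ ∈ Set.Ioo (0:ℝ) 1) :
    ∃ C₁ > (0:ℝ), ∃ C₂ > (0:ℝ), ∀ Ω : Set (EuclideanSpace ℝ (Fin n)),
      IsOpen Ω → IsConnected Ω →
      (∀ x ∈ Ω, ∀ r : ℝ, 0 < r → ENNReal.ofReal r < 2 * EMetric.diam Ω →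
        ENNReal.ofReal (θ * r ^ n) ≤ volume (Metric.ball x r ∩ Ω)) →
      ∀ t : ℝ, 0 < t → ∀ x ∈ Ω, ∀ E ⊆ Ω, MeasurableSet E →
        0 < volume E → volume E < ⊤ →
        ENNReal.ofReal (C₁ * (volume E).toReal⁻¹ *
            (if volume Ω = ⊤ then 1 else (volume (Ω \ E)).toReal / (volume Ω).toReal) *
            φ (C₂ * t * (volume E).toReal ^ (|α| / n)))
          ≤ ∫⁻ y in Ω \ E,
              ENNReal.ofReal (φ (t * ‖x - y‖ ^ (-α)) / ‖x - y‖ ^ (2 * n)) :=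
  stmt13_general n hn α hα2 φ hconv hzero hpos hL2 θ hθ
end
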